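/- arXiv:0707.1143 — 2 statements merged into one kernel-verified Lean document; each statement's English description precedes it below -/
import Mathlib

section
/- Let Λ be a compact topological ring with 1 and I an ideal of Λ such that I^n → 0 (the powers of I converge to 0 in the topology of Λ). Let X be a profinite topological Λ-module. If X/IX is a finitely generated Λ/I-module, then X is a finitely generated Λ-module, and the number of generators of X over Λ is at most the number of generators of X/IX over Λ/I. -/
open Set

/-- In a profinite topological module, powers of `I` smash the module into any
neighbourhood of zero. -/
theorem aux_smul_small
    (Λ : Type*) [CommRing Λ] [TopologicalSpace Λ] [IsTopologicalRing Λ] [CompactSpace Λ]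
    (I : Ideal Λ)
    (hI : ∀ U ∈ nhds (0 : Λ), ∃ n : ℕ, ((I ^ n : Ideal Λ) : Set Λ) ⊆ U)
    (X : Type*) [AddCommGroup X] [Module Λ X]
    [TopologicalSpace X] [IsTopologicalAddGroup X] [ContinuousSMul Λ X]
    [CompactSpace X] [T2Space X] [TotallyDisconnectedSpace X]
    {V : Set X} (hV : V ∈ nhds (0 : X)) :
    ∃ n : ℕ, ((I ^ n • (⊤ : Submodule Λ X) : Submodule Λ X) : Set X) ⊆ V := by
  -- find a clopen neighbourhood of 0 inside V
  obtain ⟨O, hOV, hOopen, hO0⟩ := mem_nhds_iff.mp hV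
  obtain ⟨W, hWclopen, hW0, hWO⟩ := compact_exists_isClopen_in_isOpen hOopen hO0
  obtain ⟨H, hH⟩ := IsTopologicalAddGroup.exist_openAddSubgroup_sub_clopen_nhds_of_zero
    hWclopen hW0
  -- tube lemma: find a neighbourhood of 0 in Λ smashing X into H
  have hcont : Continuous (fun p : Λ × X => p.1 • p.2) := continuous_smul
  have hsub : ({(0 : Λ)} ×ˢ (univ : Set X)) ⊆ (fun p : Λ × X => p.1 • p.2) ⁻¹' (H : Set X) := by
    rintro ⟨a, x⟩ ⟨ha, -⟩
    simp only [mem_singleton_iff] at ha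
    simp only [ha, Set.mem_preimage, zero_smul, SetLike.mem_coe]
    exact zero_mem _
  obtain ⟨v, w, hvopen, hwopen, hv0, hwuniv, hvw⟩ :=
    generalized_tube_lemma isCompact_singleton isCompact_univ
      (H.isOpen.preimage hcont) hsub
  obtain ⟨n, hn⟩ := hI v (hvopen.mem_nhds (hv0 rfl))
  refine ⟨n, ?_⟩
  intro x hx
  have hxH : x ∈ (H : Set X) := by
    refine Submodule.smul_induction_on hx (fun r hr m _ => ?_) (fun a b ha hb => ?_)
    · exact hvw (Set.mk_mem_prod (hn hr) (hwuniv (mem_univ m)))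
    · exact H.add_mem ha hb
  exact hOV (hWO (hH hxH))

theorem aux_span_closed
    (Λ : Type*) [CommRing Λ] [TopologicalSpace Λ] [IsTopologicalRing Λ] [CompactSpace Λ]
    (X : Type*) [AddCommGroup X] [Module Λ X]
    [TopologicalSpace X] [IsTopologicalAddGroup X] [ContinuousSMul Λ X] [T2Space X]
    (S : Finset X) : IsClosed ((Submodule.span Λ (S : Set X) : Submodule Λ X) : Set X) := by
  let f : (S → Λ) → X := fun c => ∑ i ∈ S.attach, c i • (i : X)
  have hcont : Continuous f :=
    continuous_finset_sum _ fun i _ => (continuous_apply i).smul continuous_const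
  have hrange : Set.range f = (Submodule.span Λ (S : Set X) : Set X) := by
    ext x
    constructor
    · rintro ⟨c, rfl⟩
      exact Submodule.sum_mem _ fun i _ =>
        Submodule.smul_mem _ _ (Submodule.subset_span i.2)
    · intro hx
      obtain ⟨g, -, hg⟩ := Submodule.mem_span_finset.mp hx
      refine ⟨fun i => g i, ?_⟩
      show ∑ i ∈ S.attach, g (i : X) • (i : X) = x
      rw [Finset.sum_attach S (fun y => g y • y)]
      exact hg
  rw [← hrange]
  exact (isCompact_range hcont).isClosed

/-- topological Nakayama lemma, Balister–Howson.  Let `Λ` be a compact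
topological ring with `1` and `I` an ideal whose powers tend to `0` (for every neighbourhood
`U` of `0` there is `n` with `I^n ⊆ U`).  Let `X` be a profinite (compact, Hausdorff, totally
disconnected) topological `Λ`-module.  If `X/IX` is finitely generated over `Λ/I` — i.e. some
finite set generates `X` modulo `I • X` — then `X` is a finitely generated `Λ`-module, and any
finite set generating `X/IX` lifts to a generating set of `X` of no greater cardinality. -/
theorem topological_nakayama
    (Λ : Type*) [CommRing Λ] [TopologicalSpace Λ] [IsTopologicalRing Λ] [CompactSpace Λ]
    (I : Ideal Λ)
    (hI : ∀ U ∈ nhds (0 : Λ), ∃ n : ℕ, ((I ^ n : Ideal Λ) : Set Λ) ⊆ U)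
    (X : Type*) [AddCommGroup X] [Module Λ X]
    [TopologicalSpace X] [IsTopologicalAddGroup X] [ContinuousSMul Λ X]
    [CompactSpace X] [T2Space X] [TotallyDisconnectedSpace X]
    (hfg : ∃ S : Finset X, Submodule.span Λ (S : Set X) ⊔ I • (⊤ : Submodule Λ X) = ⊤) :
    Module.Finite Λ X ∧
      ∀ S : Finset X, Submodule.span Λ (S : Set X) ⊔ I • (⊤ : Submodule Λ X) = ⊤ →
        ∃ T : Finset X, T.card ≤ S.card ∧ Submodule.span Λ (T : Set X) = ⊤ := by
  have key : ∀ S : Finset X, Submodule.span Λ (S : Set X) ⊔ I • (⊤ : Submodule Λ X) = ⊤ →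
      Submodule.span Λ (S : Set X) = ⊤ := by
    intro S hS
    set N := Submodule.span Λ (S : Set X) with hN
    have hiter : ∀ n : ℕ, N ⊔ I ^ n • (⊤ : Submodule Λ X) = ⊤ := by
      intro n
      induction n with
      | zero => simp
      | succ n ih =>
        have : (⊤ : Submodule Λ X) = N ⊔ I • (N ⊔ I ^ n • ⊤) := by
          rw [ih]; exact hS.symm
        rw [Submodule.smul_sup] at this
        have hle : N ⊔ (I • N ⊔ I • I ^ n • (⊤ : Submodule Λ X)) ≤
            N ⊔ I ^ (n + 1) • (⊤ : Submodule Λ X) := by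
          apply sup_le le_sup_left
          apply sup_le
          · exact le_trans (Submodule.smul_le.mpr fun r _ m hm =>
              Submodule.smul_mem _ _ hm) le_sup_left
          · refine le_trans (le_of_eq ?_) le_sup_right
            rw [pow_succ, mul_comm, ← Submodule.smul_assoc, smul_eq_mul]
        exact top_le_iff.mp (le_trans (le_of_eq this) hle)
    have hclosed : IsClosed (N : Set X) := aux_span_closed Λ X S
    refine Submodule.eq_top_iff'.mpr fun x => ?_
    have : x ∈ closure (N : Set X) := by
      rw [mem_closure_iff_nhds]
      intro U hU
      have hcontsub : Continuous (fun v : X => x - v) :=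
        continuous_const.sub continuous_id
      have hV0 : (fun v : X => x - v) ⁻¹' U ∈ nhds (0 : X) := by
        apply hcontsub.continuousAt.preimage_mem_nhds
        simpa using hU
      obtain ⟨n, hn⟩ := aux_smul_small Λ I hI X hV0
      have hx : x ∈ N ⊔ I ^ n • (⊤ : Submodule Λ X) := (hiter n).symm ▸ Submodule.mem_top
      obtain ⟨y, hy, z, hz, hyz⟩ := Submodule.mem_sup.mp hx
      have hzU : x - z ∈ U := hn hz
      refine ⟨x - z, hzU, ?_⟩
      have : x - z = y := by rw [← hyz]; abel
      rw [this]; exact hy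
    rwa [hclosed.closure_eq] at this
  obtain ⟨S, hS⟩ := hfg
  refine ⟨⟨⟨S, key S hS⟩⟩, fun S' hS' => ⟨S', le_rfl, key S' hS'⟩⟩
end

section
/- Let Γ ≅ Z_l^d with d ≥ 1 for a prime l, r a prime different from l, and let I be the augmentation ideal of the Iwasawa algebra Z_r[[Γ]]. Then I = I^2. -/
open scoped Classical

section SigmaHelpers

open Finset

variable {R : Type*} [CommRing R] {G H : Type*} [CommGroup G] [CommGroup H]
  [Fintype G] [Fintype H]

/-- The sum of all group elements in the group algebra. -/
noncomputable def sigmaElt (R : Type*) [CommRing R] (G : Type*) [CommGroup G] [Fintype G] :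
    MonoidAlgebra R G := ∑ g : G, MonoidAlgebra.single g 1

lemma single_mul_sigmaElt (g : G) :
    MonoidAlgebra.single g (1 : R) * sigmaElt R G = sigmaElt R G := by
  unfold sigmaElt
  rw [Finset.mul_sum]
  simp only [MonoidAlgebra.single_mul_single, one_mul]
  exact Fintype.sum_bijective (fun h => g * h) (Group.mulLeft_bijective g) _ _ fun h => rfl

lemma mul_sigmaElt (x : MonoidAlgebra R G) :
    x * sigmaElt R G = (MonoidAlgebra.lift R R G 1 x) • sigmaElt R G := by
  induction x using MonoidAlgebra.induction_linear with
  | zero => simp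
  | add f g hf hg => rw [map_add, add_mul, hf, hg, add_smul]
  | single g a =>
    rw [MonoidAlgebra.lift_single]
    have h1 : (MonoidAlgebra.single g a : MonoidAlgebra R G)
        = a • MonoidAlgebra.single g 1 := by
      rw [MonoidAlgebra.smul_single', mul_one]
    rw [h1, smul_mul_assoc, single_mul_sigmaElt]
    simp

lemma mapDomain_sigmaElt (f : G →* H) (hf : Function.Surjective f) (c : ℕ)
    (hc : Fintype.card G = c * Fintype.card H) :
    MonoidAlgebra.mapDomainRingHom R f (sigmaElt R G) = c • sigmaElt R H := by
  classical
  have hfib : ∀ h : H, (Finset.univ.filter fun g : G => f g = h).card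
      = (Finset.univ.filter fun g : G => f g = 1).card := by
    intro h
    obtain ⟨g₀, hg₀⟩ := hf h
    refine Finset.card_bij' (fun g _ => g₀⁻¹ * g) (fun g _ => g₀ * g) ?_ ?_ ?_ ?_
    · intro a ha
      simp only [mem_filter, mem_univ, true_and] at ha ⊢
      rw [map_mul, ha, map_inv, hg₀, inv_mul_cancel]
    · intro a ha
      simp only [mem_filter, mem_univ, true_and] at ha ⊢
      rw [map_mul, ha, hg₀, mul_one]
    · intro a _; simp
    · intro a _; simp
  have hcount : Fintype.card G
      = Fintype.card H * (Finset.univ.filter fun g : G => f g = 1).card := by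
    rw [← Finset.card_univ (α := G),
      Finset.card_eq_sum_card_fiberwise (f := f) (t := Finset.univ) (fun x _ => mem_univ _)]
    simp [hfib, Finset.card_univ, Finset.sum_const]
  have hc' : c = (Finset.univ.filter fun g : G => f g = 1).card := by
    have hpos : 0 < Fintype.card H := Fintype.card_pos
    apply Nat.eq_of_mul_eq_mul_left hpos
    rw [← hcount, hc]; ring
  have h1 : MonoidAlgebra.mapDomainRingHom R f (sigmaElt R G)
      = ∑ g : G, MonoidAlgebra.single (f g) (1 : R) := by
    simp [sigmaElt, map_sum, MonoidAlgebra.mapDomainRingHom_apply, Finsupp.mapDomain_single]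
  rw [h1, Finset.sum_comp (fun h => MonoidAlgebra.single h (1 : R)) f,
    Finset.image_univ_of_surjective hf]
  unfold sigmaElt
  rw [Finset.smul_sum]
  refine Finset.sum_congr rfl fun h _ => ?_
  rw [hfib h, ← hc']

end SigmaHelpers

section IwasawaAlgebra

variable (r l d : ℕ) [Fact r.Prime] [Fact l.Prime]

/-- The finite quotient `Γ/Γ^{l^n} ≅ (ℤ/l^n)^d` of `Γ = ℤ_l^d`, written multiplicatively. -/
abbrev levelGroup (n : ℕ) := Multiplicative (Fin d → ZMod (l ^ n))

/-- The transition homomorphism `(ℤ/l^{n+1})^d → (ℤ/l^n)^d`. -/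
def levelTransition (n : ℕ) : levelGroup l d (n + 1) →* levelGroup l d n :=
  AddMonoidHom.toMultiplicative
    { toFun := fun v i => ZMod.castHom (pow_dvd_pow l (Nat.le_succ n)) (ZMod (l ^ n)) (v i)
      map_zero' := by funext i; simp
      map_add' := by
        intro v w; funext i
        exact map_add (ZMod.castHom (pow_dvd_pow l (Nat.le_succ n)) (ZMod (l ^ n))) (v i) (w i) }

/-- The Iwasawa algebra `ℤ_r[[Γ]]` of `Γ = ℤ_l^d`, realized as the inverse limit of the group
algebras `ℤ_r[Γ/Γ^{l^n}]` inside their product. -/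
noncomputable def IwasawaAlgebra : Subring (Π n : ℕ, MonoidAlgebra ℤ_[r] (levelGroup l d n)) where
  carrier := {x | ∀ n : ℕ,
    MonoidAlgebra.mapDomainRingHom ℤ_[r] (levelTransition l d n) (x (n + 1)) = x n}
  zero_mem' := by intro n; simp
  one_mem' := by intro n; simp
  add_mem' := by intro x y hx hy n; simp [map_add, hx n, hy n]
  mul_mem' := by intro x y hx hy n; simp [map_mul, hx n, hy n]
  neg_mem' := by intro x hx n; simp [map_neg, hx n]

/-- The augmentation map `ℤ_r[[Γ]] → ℤ_r` (projection to level `0`, where the level group is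
trivial, followed by the augmentation of the group algebra). -/
noncomputable def augmentation : ↥(IwasawaAlgebra r l d) →+* ℤ_[r] :=
  (((MonoidAlgebra.lift ℤ_[r] ℤ_[r] (levelGroup l d 0)) 1).toRingHom).comp
    ((Pi.evalRingHom _ 0).comp (IwasawaAlgebra r l d).subtype)

end IwasawaAlgebra

set_option maxHeartbeats 1000000
set_option synthInstance.maxHeartbeats 400000

section LevelFacts

open MonoidAlgebra

variable (r l d : ℕ) [Fact r.Prime] [Fact l.Prime]

instance : NeZero l := ⟨(Fact.out : l.Prime).ne_zero⟩

lemma levelCard (n : ℕ) : Fintype.card (levelGroup l d n) = l ^ (n * d) := by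
  rw [Fintype.card_multiplicative, Fintype.card_fun, ZMod.card, Fintype.card_fin, ← pow_mul]

lemma transition_surjective (n : ℕ) : Function.Surjective (levelTransition l d n) := by
  intro w
  have hsurj : Function.Surjective
      (ZMod.castHom (pow_dvd_pow l (Nat.le_succ n)) (ZMod (l ^ n))) :=
    ZMod.ringHom_surjective _
  choose v hv using fun i => hsurj (Multiplicative.toAdd w i)
  refine ⟨Multiplicative.ofAdd v, Multiplicative.toAdd.injective (funext fun i => ?_)⟩
  exact hv i

lemma isUnit_l (hrl : r ≠ l) : IsUnit ((l : ℤ_[r])) := by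
  rw [PadicInt.isUnit_iff]
  rcases lt_or_eq_of_le (PadicInt.norm_le_one (l : ℤ_[r])) with h | h
  · exfalso
    have h2 : ((r : ℤ)) ∣ (l : ℤ) := by
      apply (PadicInt.norm_int_lt_one_iff_dvd (p := r) (l : ℤ)).mp
      simpa using h
    have h3 : r ∣ l := by exact_mod_cast h2
    exact hrl ((Nat.prime_dvd_prime_iff_eq Fact.out Fact.out).mp h3)
  · exact h

lemma mapDomain_sigmaLevel (n : ℕ) :
    mapDomainRingHom ℤ_[r] (levelTransition l d n)
      (sigmaElt ℤ_[r] (levelGroup l d (n + 1)))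
    = (l ^ d) • sigmaElt ℤ_[r] (levelGroup l d n) := by
  refine mapDomain_sigmaElt _ (transition_surjective l d n) (l ^ d) ?_
  rw [levelCard, levelCard, ← pow_add]
  congr 1
  ring

lemma lift_mapDomain (n : ℕ) (x : MonoidAlgebra ℤ_[r] (levelGroup l d (n + 1))) :
    (MonoidAlgebra.lift ℤ_[r] ℤ_[r] (levelGroup l d n)) 1
      (mapDomainRingHom ℤ_[r] (levelTransition l d n) x)
    = (MonoidAlgebra.lift ℤ_[r] ℤ_[r] (levelGroup l d (n + 1))) 1 x := by
  induction x using MonoidAlgebra.induction_linear with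
  | zero => simp
  | add f g hf hg => rw [map_add, map_add, hf, hg, map_add]
  | single g a =>
    have h1 : (mapDomainRingHom ℤ_[r] (levelTransition l d n)) (MonoidAlgebra.single g a)
        = MonoidAlgebra.single (levelTransition l d n g) a := by
      show MonoidAlgebra.mapDomain _ _ = _
      exact MonoidAlgebra.mapDomain_single
    rw [h1, MonoidAlgebra.lift_single,
      show (MonoidAlgebra.single g a : MonoidAlgebra ℤ_[r] (levelGroup l d (n+1)))
        = MonoidAlgebra.single g a from rfl, MonoidAlgebra.lift_single]
    simp

/-- The level components of the idempotent generator of the augmentation ideal. -/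
noncomputable def eLevel (hl : IsUnit ((l : ℤ_[r]))) (n : ℕ) :
    MonoidAlgebra ℤ_[r] (levelGroup l d n) :=
  1 - ((↑(hl.unit⁻¹ ^ (n * d)) : ℤ_[r])) • sigmaElt ℤ_[r] (levelGroup l d n)

lemma eLevel_compat (hl : IsUnit ((l : ℤ_[r]))) (n : ℕ) :
    mapDomainRingHom ℤ_[r] (levelTransition l d n) (eLevel r l d hl (n + 1))
    = eLevel r l d hl n := by
  unfold eLevel
  have hlin : ∀ (c : ℤ_[r]) (x : MonoidAlgebra ℤ_[r] (levelGroup l d (n + 1))),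
      mapDomainRingHom ℤ_[r] (levelTransition l d n) (c • x)
      = c • mapDomainRingHom ℤ_[r] (levelTransition l d n) x := by
    intro c x
    show MonoidAlgebra.mapDomain _ (c • x) = c • MonoidAlgebra.mapDomain _ x
    exact MonoidAlgebra.mapDomain_smul _ c x
  rw [map_sub, map_one, hlin, mapDomain_sigmaLevel]
  congr 1
  rw [← Nat.cast_smul_eq_nsmul ℤ_[r] (l ^ d), smul_smul]
  congr 1
  have hval : ((l ^ d : ℕ) : ℤ_[r]) = ((hl.unit ^ d : ℤ_[r]ˣ) : ℤ_[r]) := by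
    rw [Nat.cast_pow, Units.val_pow_eq_pow_val, IsUnit.unit_spec]
  rw [hval, ← Units.val_mul]
  congr 1
  rw [show (n + 1) * d = n * d + d by ring, pow_add]
  group

lemma eLevel_zero (hl : IsUnit ((l : ℤ_[r]))) : eLevel r l d hl 0 = 0 := by
  haveI : Subsingleton (ZMod (l ^ 0)) := by rw [pow_zero]; infer_instance
  haveI : Unique (levelGroup l d 0) := uniqueOfSubsingleton 1
  have hσ : sigmaElt ℤ_[r] (levelGroup l d 0) = 1 := by
    unfold sigmaElt
    rw [Finset.univ_unique, Finset.sum_singleton, MonoidAlgebra.one_def]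
    exact congrArg (fun g => MonoidAlgebra.single g (1 : ℤ_[r])) (Subsingleton.elim _ _)
  unfold eLevel
  simp [hσ]

/-- The idempotent generator as an element of the Iwasawa algebra. -/
noncomputable def eElt (hl : IsUnit ((l : ℤ_[r]))) : ↥(IwasawaAlgebra r l d) :=
  ⟨fun n => eLevel r l d hl n, fun n => eLevel_compat r l d hl n⟩

end LevelFacts

/-- For primes `r ≠ l` and `d ≥ 1`, the augmentation ideal
`I = ker(ℤ_r[[ℤ_l^d]] → ℤ_r)` of the Iwasawa algebra `ℤ_r[[Γ]]`, `Γ ≅ ℤ_l^d`, is idempotent: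
`I = I²`. -/
theorem augmentationIdeal_idempotent
    (r l d : ℕ) [Fact r.Prime] [Fact l.Prime] (hrl : r ≠ l) (hd : 1 ≤ d) :
    RingHom.ker (augmentation r l d) = (RingHom.ker (augmentation r l d)) ^ 2 := by
  classical
  have hl : IsUnit ((l : ℤ_[r])) := isUnit_l r l hrl
  set e := eElt r l d hl with he_def
  have haug_apply : ∀ x : ↥(IwasawaAlgebra r l d),
      augmentation r l d x
      = (MonoidAlgebra.lift ℤ_[r] ℤ_[r] (levelGroup l d 0)) 1
        ((x : Π n : ℕ, MonoidAlgebra ℤ_[r] (levelGroup l d n)) 0) := fun x => rfl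
  have heI : e ∈ RingHom.ker (augmentation r l d) := by
    rw [RingHom.mem_ker, haug_apply]
    have h0 : ((e : Π n, MonoidAlgebra ℤ_[r] (levelGroup l d n)) 0) = 0 :=
      eLevel_zero r l d hl
    rw [h0, map_zero]
  refine le_antisymm ?_ (Ideal.pow_le_self two_ne_zero)
  intro x hx
  have hx2 : ∀ n, MonoidAlgebra.mapDomainRingHom ℤ_[r] (levelTransition l d n)
      ((x : Π n : ℕ, MonoidAlgebra ℤ_[r] (levelGroup l d n)) (n + 1))
      = (x : Π n : ℕ, MonoidAlgebra ℤ_[r] (levelGroup l d n)) n := x.2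
  have haug0 : ∀ n, (MonoidAlgebra.lift ℤ_[r] ℤ_[r] (levelGroup l d n)) 1
      ((x : Π n : ℕ, MonoidAlgebra ℤ_[r] (levelGroup l d n)) n) = 0 := by
    intro n
    induction n with
    | zero => rw [← haug_apply]; exact hx
    | succ n ih =>
      rw [← lift_mapDomain r l d n, hx2 n]
      exact ih
  have hxe : x = x * e := by
    apply Subtype.ext
    funext n
    show (x : Π n : ℕ, MonoidAlgebra ℤ_[r] (levelGroup l d n)) n
      = (x : Π n : ℕ, MonoidAlgebra ℤ_[r] (levelGroup l d n)) n * eLevel r l d hl n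
    unfold eLevel
    rw [mul_sub, mul_one, mul_smul_comm, mul_sigmaElt, haug0 n, zero_smul, smul_zero, sub_zero]
  rw [pow_two, hxe]
  exact Ideal.mul_mem_mul hx heI
end
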